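/- Let (Ω, F, P) be a probability space with a filtration (F_k : 0 ≤ k ≤ n), and let 𝒴 be a family of nonnegative adapted processes indexed by {0, …, n} such that: (i) 𝒴 is L¹-bounded, i.e. sup_{Y ∈ 𝒴} max_{k=0,…,n} E[Y_k] < ∞; (ii) 𝒴 is fork-convex: every Y ∈ 𝒴 stays in zero once it hits zero, and for all Y¹, Y², Y³ ∈ 𝒴, every s ∈ {0, …, n}, and every F_s-measurable random variable λ with values in [0,1], the process defined by Y_k = Y¹_k for k < s and Y_k = Y¹_s (λ Y²_k/Y²_s + (1−λ) Y³_k/Y³_s) for k ≥ s belongs to 𝒴 (with the convention 0/0 = 0); (iii) 𝒴 contains the constant process (1, …, 1). Then there exists a strictly positive adapted process (Z_k : 0 ≤ k ≤ n) with Z_n = 1 such that ZY = (Z_k Y_k)_k is a supermartingale for every Y ∈ 𝒴, and Z can be chosen such that max_{k=0,…,n} E[Z_k Y_k] ≤ sup_{Y ∈ 𝒴} max_{k=0,…,n} E[Y_k] for every Y ∈ 𝒴. -/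

import Mathlib

/-!
For each time `k` let `G k` be the essential supremum of `E[V ⊤ | ℱ k]` over the processes
`V ∈ 𝒴` that equal `1` up to time `k`. Forking two such processes along the `ℱ k`-measurable set
where one conditional expectation dominates the other shows that this family is directed upwards,
so `G k` is the a.e. increasing limit of a sequence in it; it is finite a.e. by the `L¹` bound and
at least `1` because `1 ∈ 𝒴`. Take `Z k = G k`, where `⊤` is the terminal time.

Forking also shows that the terminal values of the processes `T ∈ 𝒴` agreeing with `Y` up to
time `k` are exactly the products `Y k * V ⊤` with `V` as above (one direction uses that `T`
stays in zero). Hence, for `s ∈ ℱ k`, `∫ₛ Z k * Y k` is the supremum of `∫ₛ T ⊤` over these `T`.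
That supremum decreases in `k`, which is the supermartingale property, and for `s = Ω` it is
bounded by the `L¹` bound of `𝒴`.
-/

open MeasureTheory Filter Set
open scoped ENNReal NNReal Topology

theorem exists_seq_iSup_comp_eq {α ι : Type*} [CompleteLinearOrder α] [TopologicalSpace α]
    [OrderTopology α] [FirstCountableTopology α] [Nonempty ι] (a : ι → α) :
    ∃ v : ℕ → ι, ⨆ n, a (v n) = ⨆ i, a i := by
  obtain ⟨u, hu_mono, hu_lim, hu_mem⟩ :=
    exists_seq_tendsto_sSup (range_nonempty a) (OrderTop.bddAbove _)
  choose v hv using hu_mem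
  refine ⟨v, ?_⟩
  simp_rw [hv, ← sSup_range]
  exact tendsto_nhds_unique (tendsto_atTop_iSup hu_mono) hu_lim

section EssSup

variable {α ι : Type*} [MeasurableSpace α] {μ : Measure α} {f : ι → α → ℝ≥0∞}

theorem exists_seq_ae_monotone_iSup_lintegral_eq [Nonempty ι]
    (hdir : ∀ i j, ∃ k, f k =ᵐ[μ] f i ⊔ f j) :
    ∃ w : ℕ → ι, (∀ᵐ x ∂μ, Monotone fun n => f (w n) x) ∧
      ⨆ n, ∫⁻ x, f (w n) x ∂μ = ⨆ i, ∫⁻ x, f i x ∂μ := by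
  choose sup hsup using hdir
  obtain ⟨v, hv⟩ := exists_seq_iSup_comp_eq fun i => ∫⁻ x, f i x ∂μ
  let w : ℕ → ι := fun n => Nat.rec (v 0) (fun n wn => sup wn (v (n + 1))) n
  have hstep : ∀ n, f (w (n + 1)) =ᵐ[μ] f (w n) ⊔ f (v (n + 1)) := fun n => hsup _ _
  have hv_le : ∀ n, ∫⁻ x, f (v n) x ∂μ ≤ ∫⁻ x, f (w n) x ∂μ
    | 0 => le_rfl
    | n + 1 => lintegral_mono_ae <| (hstep n).mono fun x hx => hx ▸ le_sup_right
  refine ⟨w, ?_, le_antisymm (iSup_comp_le (fun i => ∫⁻ x, f i x ∂μ) w) (hv ▸ iSup_mono hv_le)⟩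
  filter_upwards [ae_all_iff.2 hstep] with x hx
  exact monotone_nat_of_le_succ fun n => (hx n).symm ▸ le_sup_left

theorem ae_le_iSup_of_iSup_lintegral_eq (hf : ∀ i, AEMeasurable (f i) μ)
    (hdir : ∀ i j, ∃ k, f k =ᵐ[μ] f i ⊔ f j) (hfin : ⨆ i, ∫⁻ x, f i x ∂μ ≠ ∞) {w : ℕ → ι}
    (hw_mono : ∀ᵐ x ∂μ, Monotone fun n => f (w n) x)
    (hw : ⨆ n, ∫⁻ x, f (w n) x ∂μ = ⨆ i, ∫⁻ x, f i x ∂μ) (j : ι) :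
    f j ≤ᵐ[μ] fun x => ⨆ n, f (w n) x := by
  have hG : ∫⁻ x, ⨆ n, f (w n) x ∂μ = ⨆ i, ∫⁻ x, f i x ∂μ := by
    rw [lintegral_iSup' (fun n => hf _) hw_mono, hw]
  have hGj : ∫⁻ x, (⨆ n, f (w n) x) ⊔ f j x ∂μ ≤ ∫⁻ x, ⨆ n, f (w n) x ∂μ := by
    simp_rw [iSup_sup]
    rw [lintegral_iSup' (f := fun n x => f (w n) x ⊔ f j x) (fun n => (hf _).sup (hf j))
      (hw_mono.mono fun x hx a b hab => sup_le_sup_right (hx hab) _), hG]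
    refine iSup_le fun n => ?_
    obtain ⟨k, hk⟩ := hdir (w n) j
    exact (lintegral_congr_ae hk.symm).le.trans (le_iSup (fun i => ∫⁻ x, f i x ∂μ) k)
  -- `G ⊔ f j` has integral at most that of `G < ∞`, so the two agree a.e.
  have hGeq := ae_eq_of_ae_le_of_lintegral_le (ae_of_all _ fun x => le_sup_left)
    (hG ▸ hfin) ((AEMeasurable.iSup fun n => hf _).sup (hf j)) hGj
  filter_upwards [hGeq] with x hx
  exact le_sup_right.trans hx.symm.le

theorem exists_seq_ae_monotone_ae_le_iSup [Nonempty ι] (hf : ∀ i, AEMeasurable (f i) μ)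
    (hdir : ∀ i j, ∃ k, f k =ᵐ[μ] f i ⊔ f j) (hfin : ⨆ i, ∫⁻ x, f i x ∂μ ≠ ∞) :
    ∃ w : ℕ → ι, (∀ᵐ x ∂μ, Monotone fun n => f (w n) x) ∧
      ∀ j, f j ≤ᵐ[μ] fun x => ⨆ n, f (w n) x := by
  obtain ⟨w, hw_mono, hw⟩ := exists_seq_ae_monotone_iSup_lintegral_eq hdir
  exact ⟨w, hw_mono, ae_le_iSup_of_iSup_lintegral_eq hf hdir hfin hw_mono hw⟩

theorem lintegral_mul_iSup_le_iSup (hf : ∀ i, AEMeasurable (f i) μ) {w : ℕ → ι}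
    (hw_mono : ∀ᵐ x ∂μ, Monotone fun n => f (w n) x) {c : α → ℝ≥0∞} (hc : AEMeasurable c μ) :
    ∫⁻ x, c x * ⨆ n, f (w n) x ∂μ ≤ ⨆ i, ∫⁻ x, c x * f i x ∂μ := by
  simp_rw [ENNReal.mul_iSup]
  rw [lintegral_iSup' (f := fun n x => c x * f (w n) x) (fun n => hc.mul (hf _))
    (hw_mono.mono fun x hx a b hab => mul_le_mul' le_rfl (hx hab))]
  exact iSup_comp_le (fun i => ∫⁻ x, c x * f i x ∂μ) w

end EssSup

section CondExp

variable {Ω : Type*} {m m₀ : MeasurableSpace Ω} {μ : Measure Ω}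

theorem setLIntegral_ofReal_condExp (hm : m ≤ m₀) [SigmaFinite (μ.trim hm)] {f : Ω → ℝ}
    (hf : Integrable f μ) (hf0 : 0 ≤ᵐ[μ] f) {s : Set Ω} (hs : MeasurableSet[m] s) :
    ∫⁻ x in s, ENNReal.ofReal (μ[f|m] x) ∂μ = ∫⁻ x in s, ENNReal.ofReal (f x) ∂μ := by
  rw [← setLIntegral_condLExp hm μ (fun x => ENNReal.ofReal (f x)) hs]
  exact lintegral_congr_ae (ae_restrict_of_ae (condLExp_ofReal m hf hf0).symm)

theorem condExp_piecewise {E : Type*} [NormedAddCommGroup E] [NormedSpace ℝ E] [CompleteSpace E]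
    (hm : m ≤ m₀) {f g : Ω → E} {s : Set Ω} [DecidablePred (· ∈ s)] (hs : MeasurableSet[m] s)
    (hf : Integrable f μ) (hg : Integrable g μ) :
    μ[s.piecewise f g|m] =ᵐ[μ] s.piecewise (μ[f|m]) (μ[g|m]) := by
  rw [← Set.indicator_add_compl_eq_piecewise, ← Set.indicator_add_compl_eq_piecewise]
  filter_upwards [condExp_add (hf.indicator (hm s hs)) (hg.indicator (hm _ hs.compl)) m,
    condExp_indicator hf hs, condExp_indicator hg hs.compl] with x hx hfx hgx
  rw [hx, Pi.add_apply, Pi.add_apply, hfx, hgx]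

theorem ofReal_condExp_mul_of_stronglyMeasurable_left {f g : Ω → ℝ}
    (hf : StronglyMeasurable[m] f) (hf0 : 0 ≤ f) (hfg : Integrable (f * g) μ)
    (hg : Integrable g μ) :
    (fun x => ENNReal.ofReal (μ[f * g|m] x)) =ᵐ[μ]
      fun x => ENNReal.ofReal (f x) * ENNReal.ofReal (μ[g|m] x) := by
  filter_upwards [condExp_mul_of_stronglyMeasurable_left hf hfg hg] with x hx
  rw [hx, Pi.mul_apply, ENNReal.ofReal_mul (hf0 x)]

end CondExp

section Fork

variable {ι Ω : Type*} [LinearOrder ι] {m : MeasurableSpace Ω}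

/-- Lean's `x / 0 = 0` realises the convention `0 / 0 = 0` of the fork. -/
noncomputable def fork (Y₁ Y₂ Y₃ : ι → Ω → ℝ) (s : ι) (l : Ω → ℝ) : ι → Ω → ℝ := fun k ω =>
  if k < s then Y₁ k ω
  else Y₁ s ω * (l ω * (Y₂ k ω / Y₂ s ω) + (1 - l ω) * (Y₃ k ω / Y₃ s ω))

def IsForkClosed (ℱ : Filtration ι m) (𝒴 : Set (ι → Ω → ℝ)) : Prop :=
  ∀ Y₁ ∈ 𝒴, ∀ Y₂ ∈ 𝒴, ∀ Y₃ ∈ 𝒴, ∀ s : ι, ∀ l : Ω → ℝ,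
    Measurable[ℱ s] l → (∀ ω, l ω ∈ Icc (0 : ℝ) 1) → fork Y₁ Y₂ Y₃ s l ∈ 𝒴

def continuations (𝒴 : Set (ι → Ω → ℝ)) (Y : ι → Ω → ℝ) (k : ι) : Set (ι → Ω → ℝ) :=
  {T ∈ 𝒴 | ∀ j ≤ k, T j = Y j}

theorem continuations_anti {𝒴 : Set (ι → Ω → ℝ)} {Y : ι → Ω → ℝ} :
    Antitone (continuations 𝒴 Y) :=
  fun _ _ hkl _ hT => ⟨hT.1, fun j hj => hT.2 j (hj.trans hkl)⟩

variable {Y₁ Y₂ Y₃ : ι → Ω → ℝ} {s j : ι} {l : Ω → ℝ}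

theorem fork_of_lt (hj : j < s) : fork Y₁ Y₂ Y₃ s l j = Y₁ j :=
  funext fun _ => if_pos hj

theorem fork_apply_of_le (hj : s ≤ j) (h₂ : Y₂ s = 1) (h₃ : Y₃ s = 1) (ω : Ω) :
    fork Y₁ Y₂ Y₃ s l j ω = Y₁ s ω * (l ω * Y₂ j ω + (1 - l ω) * Y₃ j ω) := by
  simp [fork, hj.not_gt, h₂, h₃]

theorem fork_mem_continuations {ℱ : Filtration ι m} {𝒴 : Set (ι → Ω → ℝ)}
    (hfork : IsForkClosed ℱ 𝒴) (hY₁ : Y₁ ∈ 𝒴) (hY₂ : Y₂ ∈ 𝒴) (hY₃ : Y₃ ∈ 𝒴)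
    (hl : Measurable[ℱ s] l) (hl01 : ∀ ω, l ω ∈ Icc (0 : ℝ) 1) (h₂ : Y₂ s = 1) (h₃ : Y₃ s = 1) :
    fork Y₁ Y₂ Y₃ s l ∈ continuations 𝒴 Y₁ s := by
  refine ⟨hfork Y₁ hY₁ Y₂ hY₂ Y₃ hY₃ s l hl hl01, fun j hj => ?_⟩
  obtain hj | rfl := hj.lt_or_eq
  · exact fork_of_lt hj
  · funext ω
    rw [fork_apply_of_le le_rfl h₂ h₃, h₂, h₃]
    simp

end Fork

theorem supermartingale_of_setLIntegral_le {ι Ω : Type*} [Preorder ι] {m : MeasurableSpace Ω}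
    {μ : Measure Ω} [IsFiniteMeasure μ] {ℱ : Filtration ι m} {f : ι → Ω → ℝ}
    (hadp : Adapted ℱ f) (hf0 : ∀ i, 0 ≤ᵐ[μ] f i)
    (hfin : ∀ i, ∫⁻ ω, ENNReal.ofReal (f i ω) ∂μ ≠ ∞)
    (hf : ∀ i j, i ≤ j → ∀ s, MeasurableSet[ℱ i] s →
      ∫⁻ ω in s, ENNReal.ofReal (f j ω) ∂μ ≤ ∫⁻ ω in s, ENNReal.ofReal (f i ω) ∂μ) :
    Supermartingale f ℱ μ := by
  have hint : ∀ i, Integrable (f i) μ := fun i =>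
    ⟨((hadp i).mono (ℱ.le i) le_rfl).aestronglyMeasurable,
      (hasFiniteIntegral_iff_ofReal (hf0 i)).2 (hfin i).lt_top⟩
  have hset : ∀ i s, ∫ ω in s, f i ω ∂μ = (∫⁻ ω in s, ENNReal.ofReal (f i ω) ∂μ).toReal :=
    fun i s => integral_eq_lintegral_of_nonneg_ae (ae_restrict_of_ae (hf0 i))
      (hint i).aestronglyMeasurable.restrict
  have hsub : Submartingale (-f) ℱ μ := by
    refine submartingale_of_setIntegral_le (hadp.stronglyAdapted.neg) (fun i => (hint i).neg)
      fun i j hij s hs => ?_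
    simp only [Pi.neg_apply, integral_neg, neg_le_neg_iff, hset]
    exact ENNReal.toReal_mono (ne_top_of_le_ne_top (hfin i) (setLIntegral_le_lintegral _ _))
      (hf i j hij s hs)
  simpa using hsub.neg

section Density

variable {ι Ω : Type*} [LinearOrder ι] [OrderTop ι] {m : MeasurableSpace Ω} {P : Measure Ω}
  {ℱ : Filtration ι m} {𝒴 : Set (ι → Ω → ℝ)} {k : ι}

theorem exists_continuation_eq_mul (hfork : IsForkClosed ℱ 𝒴) {Y V : ι → Ω → ℝ} (hY : Y ∈ 𝒴)
    (hV : V ∈ continuations 𝒴 1 k) : ∃ T ∈ continuations 𝒴 Y k, T ⊤ = Y k * V ⊤ := by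
  refine ⟨fork Y V V k 1, fork_mem_continuations hfork hY hV.1 hV.1 measurable_const
    (fun _ => ⟨zero_le_one, le_rfl⟩) (hV.2 k le_rfl) (hV.2 k le_rfl), funext fun ω => ?_⟩
  rw [fork_apply_of_le le_top (hV.2 k le_rfl) (hV.2 k le_rfl)]
  simp

theorem exists_mem_continuations_one_eq_mul (hfork : IsForkClosed ℱ 𝒴) (hone : 1 ∈ 𝒴)
    {T : ι → Ω → ℝ} (hT : T ∈ 𝒴) (hTk : Measurable[ℱ k] (T k))
    (hT0 : ∀ ω, T k ω = 0 → T ⊤ ω = 0) :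
    ∃ V ∈ continuations 𝒴 1 k, T ⊤ = T k * V ⊤ := by
  classical
  set A := {ω | T k ω ≠ 0}
  have hA : MeasurableSet[ℱ k] A := hTk (measurableSet_singleton 0).compl
  refine ⟨fork 1 T 1 k (A.indicator 1),
    ⟨hfork 1 hone T hT 1 hone k _ (measurable_const.indicator hA) fun ω => ?_, fun j hj => ?_⟩,
    funext fun ω => ?_⟩
  · by_cases hω : ω ∈ A <;> simp [hω]
  · obtain hj | rfl := hj.lt_or_eq
    · exact fork_of_lt hj
    · funext ω
      by_cases hω : T j ω = 0 <;> simp [fork, A, hω]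
  · by_cases hω : T k ω = 0
    · simp [fork, hω, hT0 ω hω]
    · simp [fork, A, hω]
      field_simp

theorem exists_mem_continuations_one_condExp_ae_eq_max (hfork : IsForkClosed ℱ 𝒴)
    (hone : 1 ∈ 𝒴) (hint : ∀ Y ∈ 𝒴, Integrable (Y ⊤) P) {U V : ι → Ω → ℝ}
    (hU : U ∈ continuations 𝒴 1 k) (hV : V ∈ continuations 𝒴 1 k) :
    ∃ W ∈ continuations 𝒴 1 k, P[W ⊤|ℱ k] =ᵐ[P] P[U ⊤|ℱ k] ⊔ P[V ⊤|ℱ k] := by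
  classical
  set A := {ω | P[V ⊤|ℱ k] ω ≤ P[U ⊤|ℱ k] ω}
  have hA : MeasurableSet[ℱ k] A :=
    measurableSet_le stronglyMeasurable_condExp.measurable stronglyMeasurable_condExp.measurable
  refine ⟨fork 1 U V k (A.indicator 1), fork_mem_continuations hfork hone hU.1 hV.1
    (measurable_const.indicator hA) (fun ω => ?_) (hU.2 k le_rfl) (hV.2 k le_rfl), ?_⟩
  · by_cases hω : ω ∈ A <;> simp [hω]
  have htop : fork 1 U V k (A.indicator 1) ⊤ = A.piecewise (U ⊤) (V ⊤) := by
    funext ω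
    rw [fork_apply_of_le le_top (hU.2 k le_rfl) (hV.2 k le_rfl)]
    by_cases hω : ω ∈ A <;> simp [hω]
  rw [htop]
  filter_upwards [condExp_piecewise (ℱ.le k) hA (hint U hU.1) (hint V hV.1)] with ω hω
  rw [hω]
  by_cases h : P[V ⊤|ℱ k] ω ≤ P[U ⊤|ℱ k] ω
  · simp [A, h]
  · simp [A, h, (not_le.1 h).le]

variable [IsFiniteMeasure P]

theorem exists_seq_continuations_one_ae_le_iSup (hfork : IsForkClosed ℱ 𝒴) (hone : 1 ∈ 𝒴)
    (hint : ∀ Y ∈ 𝒴, Integrable (Y ⊤) P) (hnonneg : ∀ Y ∈ 𝒴, ∀ ω, 0 ≤ Y ⊤ ω)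
    (hL1 : ⨆ Y ∈ 𝒴, ∫⁻ ω, ENNReal.ofReal (Y ⊤ ω) ∂P ≠ ∞) (k : ι) :
    ∃ w : ℕ → continuations 𝒴 1 k,
      (∀ᵐ ω ∂P, Monotone fun n => ENNReal.ofReal (P[(w n : ι → Ω → ℝ) ⊤|ℱ k] ω)) ∧
      ∀ V ∈ continuations 𝒴 1 k, ∀ᵐ ω ∂P,
        ENNReal.ofReal (P[V ⊤|ℱ k] ω) ≤ ⨆ n, ENNReal.ofReal (P[(w n : ι → Ω → ℝ) ⊤|ℱ k] ω) := by
  have : Nonempty (continuations 𝒴 1 k) := ⟨⟨1, hone, fun _ _ => rfl⟩⟩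
  obtain ⟨w, hw_mono, hw_dom⟩ := exists_seq_ae_monotone_ae_le_iSup (μ := P)
    (f := fun (V : continuations 𝒴 1 k) ω => ENNReal.ofReal (P[(V : ι → Ω → ℝ) ⊤|ℱ k] ω))
    (fun V => (stronglyMeasurable_condExp.measurable.mono (ℱ.le k) le_rfl).ennreal_ofReal
      |>.aemeasurable)
    (fun U V => by
      obtain ⟨W, hW, hmax⟩ :=
        exists_mem_continuations_one_condExp_ae_eq_max hfork hone hint U.2 V.2
      exact ⟨⟨W, hW⟩, hmax.mono fun ω hω => by simp [hω]⟩)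
    (ne_top_of_le_ne_top hL1 (iSup_le fun V => by
      have h := setLIntegral_ofReal_condExp (ℱ.le k) (hint V V.2.1)
        (ae_of_all _ (hnonneg V V.2.1)) MeasurableSet.univ
      rw [setLIntegral_univ, setLIntegral_univ] at h
      exact h.le.trans (le_iSup₂ (f := fun Y _ => ∫⁻ ω, ENNReal.ofReal (Y ⊤ ω) ∂P) _ V.2.1)))
  exact ⟨w, hw_mono, fun V hV => hw_dom ⟨V, hV⟩⟩

theorem setLIntegral_mul_iSup_le_iSup_continuations (hfork : IsForkClosed ℱ 𝒴)
    (hint : ∀ Y ∈ 𝒴, Integrable (Y ⊤) P) (hnonneg : ∀ Y ∈ 𝒴, ∀ k ω, 0 ≤ Y k ω)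
    {w : ℕ → continuations 𝒴 1 k}
    (hw_mono : ∀ᵐ ω ∂P, Monotone fun n => ENNReal.ofReal (P[(w n : ι → Ω → ℝ) ⊤|ℱ k] ω))
    {Y : ι → Ω → ℝ} (hY : Y ∈ 𝒴) (hYk : Measurable[ℱ k] (Y k)) {s : Set Ω}
    (hs : MeasurableSet[ℱ k] s) :
    ∫⁻ ω in s, ENNReal.ofReal (Y k ω) * ⨆ n, ENNReal.ofReal (P[(w n : ι → Ω → ℝ) ⊤|ℱ k] ω) ∂P
      ≤ ⨆ T ∈ continuations 𝒴 Y k, ∫⁻ ω in s, ENNReal.ofReal (T ⊤ ω) ∂P := by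
  refine (lintegral_mul_iSup_le_iSup (μ := P.restrict s)
    (f := fun (V : continuations 𝒴 1 k) ω => ENNReal.ofReal (P[(V : ι → Ω → ℝ) ⊤|ℱ k] ω))
    (fun V => (stronglyMeasurable_condExp.measurable.mono (ℱ.le k) le_rfl).ennreal_ofReal
      |>.aemeasurable) (ae_restrict_of_ae hw_mono)
    (hYk.mono (ℱ.le k) le_rfl).ennreal_ofReal.aemeasurable).trans (iSup_le fun V => ?_)
  obtain ⟨T, hT, hTY⟩ := exists_continuation_eq_mul hfork hY V.2
  have hpull := ofReal_condExp_mul_of_stronglyMeasurable_left hYk.stronglyMeasurable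
    (hnonneg Y hY k) (hTY ▸ hint T hT.1) (hint V V.2.1)
  rw [← hTY] at hpull
  calc ∫⁻ ω in s, ENNReal.ofReal (Y k ω) * ENNReal.ofReal (P[(V : ι → Ω → ℝ) ⊤|ℱ k] ω) ∂P
      = ∫⁻ ω in s, ENNReal.ofReal (P[T ⊤|ℱ k] ω) ∂P :=
        lintegral_congr_ae (ae_restrict_of_ae hpull.symm)
    _ = ∫⁻ ω in s, ENNReal.ofReal (T ⊤ ω) ∂P :=
        setLIntegral_ofReal_condExp (ℱ.le k) (hint T hT.1) (ae_of_all _ (hnonneg T hT.1 ⊤)) hs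
    _ ≤ _ := le_iSup₂ (f := fun T _ => ∫⁻ ω in s, ENNReal.ofReal (T ⊤ ω) ∂P) T hT

theorem setLIntegral_ofReal_top_le_mul (hfork : IsForkClosed ℱ 𝒴) (hone : 1 ∈ 𝒴)
    (hint : ∀ Y ∈ 𝒴, Integrable (Y ⊤) P) (hnonneg : ∀ Y ∈ 𝒴, ∀ k ω, 0 ≤ Y k ω)
    {G : Ω → ℝ≥0∞}
    (hG : ∀ V ∈ continuations 𝒴 1 k, ∀ᵐ ω ∂P, ENNReal.ofReal (P[V ⊤|ℱ k] ω) ≤ G ω)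
    {T : ι → Ω → ℝ} (hT : T ∈ 𝒴) (hTk : Measurable[ℱ k] (T k))
    (hT0 : ∀ ω, T k ω = 0 → T ⊤ ω = 0) {s : Set Ω} (hs : MeasurableSet[ℱ k] s) :
    ∫⁻ ω in s, ENNReal.ofReal (T ⊤ ω) ∂P ≤ ∫⁻ ω in s, ENNReal.ofReal (T k ω) * G ω ∂P := by
  obtain ⟨V, hV, hTV⟩ := exists_mem_continuations_one_eq_mul hfork hone hT hTk hT0
  have hpull := ofReal_condExp_mul_of_stronglyMeasurable_left hTk.stronglyMeasurable
    (hnonneg T hT k) (hTV ▸ hint T hT) (hint V hV.1)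
  rw [← hTV] at hpull
  rw [← setLIntegral_ofReal_condExp (ℱ.le k) (hint T hT) (ae_of_all _ (hnonneg T hT ⊤)) hs]
  refine lintegral_mono_ae (ae_restrict_of_ae ?_)
  filter_upwards [hpull, hG V hV] with ω hpullω hGω
  rw [hpullω]
  exact mul_le_mul' le_rfl hGω

theorem setLIntegral_mul_iSup_eq_iSup_continuations (hfork : IsForkClosed ℱ 𝒴) (hone : 1 ∈ 𝒴)
    (hint : ∀ Y ∈ 𝒴, Integrable (Y ⊤) P) (hnonneg : ∀ Y ∈ 𝒴, ∀ k ω, 0 ≤ Y k ω)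
    (hzero : ∀ Y ∈ 𝒴, ∀ ω, ∀ k l, k ≤ l → Y k ω = 0 → Y l ω = 0)
    {w : ℕ → continuations 𝒴 1 k}
    (hw_mono : ∀ᵐ ω ∂P, Monotone fun n => ENNReal.ofReal (P[(w n : ι → Ω → ℝ) ⊤|ℱ k] ω))
    (hw_dom : ∀ V ∈ continuations 𝒴 1 k, ∀ᵐ ω ∂P,
      ENNReal.ofReal (P[V ⊤|ℱ k] ω) ≤ ⨆ n, ENNReal.ofReal (P[(w n : ι → Ω → ℝ) ⊤|ℱ k] ω))
    {Y : ι → Ω → ℝ} (hY : Y ∈ 𝒴) (hYk : Measurable[ℱ k] (Y k)) {s : Set Ω}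
    (hs : MeasurableSet[ℱ k] s) :
    ∫⁻ ω in s, ENNReal.ofReal (Y k ω) * ⨆ n, ENNReal.ofReal (P[(w n : ι → Ω → ℝ) ⊤|ℱ k] ω) ∂P
      = ⨆ T ∈ continuations 𝒴 Y k, ∫⁻ ω in s, ENNReal.ofReal (T ⊤ ω) ∂P := by
  refine le_antisymm
    (setLIntegral_mul_iSup_le_iSup_continuations hfork hint hnonneg hw_mono hY hYk hs)
    (iSup₂_le fun T hT => ?_)
  have hTk : T k = Y k := hT.2 k le_rfl
  rw [← hTk]
  exact setLIntegral_ofReal_top_le_mul hfork hone hint hnonneg hw_dom hT.1 (hTk ▸ hYk)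
    (fun ω => hzero T hT.1 ω k ⊤ le_top) hs

theorem exists_density_setLIntegral_eq (hadapted : ∀ Y ∈ 𝒴, Adapted ℱ Y)
    (hnonneg : ∀ Y ∈ 𝒴, ∀ k ω, 0 ≤ Y k ω) (hint : ∀ Y ∈ 𝒴, Integrable (Y ⊤) P)
    (hL1 : ⨆ Y ∈ 𝒴, ∫⁻ ω, ENNReal.ofReal (Y ⊤ ω) ∂P ≠ ∞)
    (hzero : ∀ Y ∈ 𝒴, ∀ ω, ∀ k l, k ≤ l → Y k ω = 0 → Y l ω = 0)
    (hfork : IsForkClosed ℱ 𝒴) (hone : 1 ∈ 𝒴) :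
    ∃ Z : ι → Ω → ℝ, Adapted ℱ Z ∧ (∀ k, ∀ᵐ ω ∂P, 0 < Z k ω) ∧ Z ⊤ = 1 ∧
      ∀ Y ∈ 𝒴, ∀ k s, MeasurableSet[ℱ k] s →
        ∫⁻ ω in s, ENNReal.ofReal (Z k ω * Y k ω) ∂P
          = ⨆ T ∈ continuations 𝒴 Y k, ∫⁻ ω in s, ENNReal.ofReal (T ⊤ ω) ∂P := by
  choose w hw_mono hw_dom using
    exists_seq_continuations_one_ae_le_iSup hfork hone hint (fun Y hY => hnonneg Y hY ⊤) hL1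
  set G : ι → Ω → ℝ≥0∞ := fun k ω => ⨆ n, ENNReal.ofReal (P[(w k n : ι → Ω → ℝ) ⊤|ℱ k] ω)
  have hG_meas : ∀ k, Measurable[ℱ k] (G k) := fun k =>
    Measurable.iSup fun n => stronglyMeasurable_condExp.measurable.ennreal_ofReal
  have hchar : ∀ Y ∈ 𝒴, ∀ k s, MeasurableSet[ℱ k] s →
      ∫⁻ ω in s, ENNReal.ofReal (Y k ω) * G k ω ∂P
        = ⨆ T ∈ continuations 𝒴 Y k, ∫⁻ ω in s, ENNReal.ofReal (T ⊤ ω) ∂P :=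
    fun Y hY k _ hs => setLIntegral_mul_iSup_eq_iSup_continuations hfork hone hint hnonneg hzero
      (hw_mono k) (hw_dom k) hY (hadapted Y hY k) hs
  have hP1 : ∀ k, P[(1 : Ω → ℝ)|ℱ k] = 1 := fun k => condExp_const (ℱ.le k) (1 : ℝ)
  have hG_one : ∀ k, ∀ᵐ ω ∂P, 1 ≤ G k ω := fun k => by
    filter_upwards [hw_dom k 1 ⟨hone, fun _ _ => rfl⟩] with ω hω
    simpa [hP1] using hω
  have hG_fin : ∀ k, ∀ᵐ ω ∂P, G k ω < ∞ := fun k => by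
    refine ae_lt_top' ((hG_meas k).mono (ℱ.le k) le_rfl).aemeasurable
      (ne_top_of_le_ne_top hL1 ?_)
    have h := hchar 1 hone k univ MeasurableSet.univ
    simp only [Pi.one_apply, ENNReal.ofReal_one, one_mul, setLIntegral_univ] at h
    exact h.le.trans (biSup_mono fun T hT => hT.1)
  have hG_top : G ⊤ = 1 := funext fun ω => by
    have h : ∀ n, (w ⊤ n : ι → Ω → ℝ) ⊤ = 1 := fun n => (w ⊤ n).2.2 ⊤ le_rfl
    simp [G, h, hP1]
  refine ⟨fun k ω => (G k ω).toReal, fun k => (hG_meas k).ennreal_toReal, fun k => ?_,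
    funext fun ω => by simp [hG_top], fun Y hY k s hs => ?_⟩
  · filter_upwards [hG_one k, hG_fin k] with ω h1 hfin
    exact ENNReal.toReal_pos (zero_lt_one.trans_le h1).ne' hfin.ne
  · rw [← hchar Y hY k s hs]
    refine lintegral_congr_ae (ae_restrict_of_ae ?_)
    filter_upwards [hG_fin k] with ω hω
    rw [ENNReal.ofReal_mul ENNReal.toReal_nonneg, ENNReal.ofReal_toReal hω.ne, mul_comm]

end Density

/-- (Discrete-time supermartingale density.) For an `L¹`-bounded,
fork-convex family `𝒴` of nonnegative adapted processes indexed by `{0, …, n}` containing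
the constant process `1`, there is a strictly positive adapted process `Z` with `Z_n = 1`
such that `ZY` is a supermartingale for every `Y ∈ 𝒴`, and `Z` can be chosen with
`max_k E[Z_k Y_k] ≤ sup_{Y ∈ 𝒴} max_k E[Y_k]`. -/
theorem statement5 {Ω : Type*} {m : MeasurableSpace Ω} (P : Measure Ω) [IsProbabilityMeasure P]
    (n : ℕ) (ℱ : Filtration (Fin (n + 1)) m)
    (𝒴 : Set (Fin (n + 1) → Ω → ℝ))
    (hadapted : ∀ Y ∈ 𝒴, Adapted ℱ Y)
    (hnonneg : ∀ Y ∈ 𝒴, ∀ k ω, 0 ≤ Y k ω)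
    (hL1 : (⨆ Y ∈ 𝒴, ⨆ k, ∫⁻ ω, ENNReal.ofReal (Y k ω) ∂P) < ⊤)
    (hzero : ∀ Y ∈ 𝒴, ∀ ω, ∀ k l : Fin (n + 1), k ≤ l → Y k ω = 0 → Y l ω = 0)
    (hfork : ∀ Y1 ∈ 𝒴, ∀ Y2 ∈ 𝒴, ∀ Y3 ∈ 𝒴, ∀ s : Fin (n + 1), ∀ l : Ω → ℝ,
      Measurable[ℱ s] l → (∀ ω, l ω ∈ Icc (0 : ℝ) 1) →
      (fun k ω => if k < s then Y1 k ω
        else Y1 s ω * (l ω * (Y2 k ω / Y2 s ω) + (1 - l ω) * (Y3 k ω / Y3 s ω))) ∈ 𝒴)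
    (hone : (fun _ _ => (1 : ℝ)) ∈ 𝒴) :
    ∃ Z : Fin (n + 1) → Ω → ℝ, Adapted ℱ Z ∧ (∀ᵐ ω ∂P, ∀ k, 0 < Z k ω) ∧
      Z (Fin.last n) = (fun _ => 1) ∧
      (∀ Y ∈ 𝒴, Supermartingale (fun k ω => Z k ω * Y k ω) ℱ P) ∧
      ∀ Y ∈ 𝒴, (⨆ k, ∫⁻ ω, ENNReal.ofReal (Z k ω * Y k ω) ∂P) ≤
        ⨆ Y' ∈ 𝒴, ⨆ k, ∫⁻ ω, ENNReal.ofReal (Y' k ω) ∂P := by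
  have hL1_top : ⨆ Y ∈ 𝒴, ∫⁻ ω, ENNReal.ofReal (Y ⊤ ω) ∂P
      ≤ ⨆ Y ∈ 𝒴, ⨆ k, ∫⁻ ω, ENNReal.ofReal (Y k ω) ∂P :=
    iSup₂_mono fun Y _ => le_iSup (fun k => ∫⁻ ω, ENNReal.ofReal (Y k ω) ∂P) ⊤
  have hint : ∀ Y ∈ 𝒴, Integrable (Y ⊤) P := fun Y hY =>
    ⟨((hadapted Y hY ⊤).mono (ℱ.le ⊤) le_rfl).aestronglyMeasurable,
      (hasFiniteIntegral_iff_ofReal (ae_of_all _ (hnonneg Y hY ⊤))).2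
        ((le_iSup₂_of_le Y hY le_rfl).trans_lt (hL1_top.trans_lt hL1))⟩
  obtain ⟨Z, hZ_adapted, hZ_pos, hZ_top, hZY⟩ := exists_density_setLIntegral_eq hadapted hnonneg
    hint (ne_top_of_le_ne_top hL1.ne hL1_top) hzero hfork hone
  have hbound : ∀ Y ∈ 𝒴, ∀ k, ∫⁻ ω, ENNReal.ofReal (Z k ω * Y k ω) ∂P
      ≤ ⨆ Y' ∈ 𝒴, ⨆ k, ∫⁻ ω, ENNReal.ofReal (Y' k ω) ∂P := fun Y hY k => by
    have h := hZY Y hY k univ MeasurableSet.univ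
    simp only [setLIntegral_univ] at h
    exact h.le.trans ((biSup_mono fun T hT => hT.1).trans hL1_top)
  refine ⟨Z, hZ_adapted, ae_all_iff.2 hZ_pos, hZ_top, fun Y hY => ?_,
    fun Y hY => iSup_le (hbound Y hY)⟩
  refine supermartingale_of_setLIntegral_le (fun k => (hZ_adapted k).mul (hadapted Y hY k))
    (fun k => (hZ_pos k).mono fun ω hω => mul_nonneg hω.le (hnonneg Y hY k ω))
    (fun k => ne_top_of_le_ne_top hL1.ne (hbound Y hY k)) fun i j hij s hs => ?_
  rw [hZY Y hY j s (ℱ.mono hij s hs), hZY Y hY i s hs]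
  exact biSup_mono fun T hT => continuations_anti hij hT
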